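/- For a vertex u in a connected graph Q with at least two vertices, let G₁ be obtained from Q by attaching two disjoint paths of a and b vertices to u (adding an edge from u to an end of each path), and let G₂ be obtained from Q by attaching a single path of a+b vertices to u, where a ≥ b ≥ 1. Then χ(G₁) < χ(G₂), where χ(G) = Σ_{uv ∈ E(G)} 1/√(d_G(u)+d_G(v)). -/

import Mathlib

/-- The sum-connectivity index `χ(G) = Σ_{uv ∈ E(G)} 1/√(d(u)+d(v))`:
each unordered edge is counted once via a halved double sum. -/
noncomputable def sumConn {V : Type*} [Fintype V] (G : SimpleGraph V) : ℝ := by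
  classical
  exact (1 / 2) * ∑ u : V, ∑ v : V,
    if G.Adj u v then (Real.sqrt ((G.degree u : ℝ) + (G.degree v : ℝ)))⁻¹ else 0

/-- The graph obtained from `Q` by attaching a path on `a` new vertices to `u`:
the new vertices `0, 1, …, a-1` form a path, and `u` is joined to the terminal vertex `0`. -/
def attachPath {V : Type*} (Q : SimpleGraph V) (u : V) (a : ℕ) : SimpleGraph (V ⊕ Fin a) :=
  SimpleGraph.fromRel (fun x y =>
    (∃ v w, x = Sum.inl v ∧ y = Sum.inl w ∧ Q.Adj v w) ∨
    (∃ i j : Fin a, x = Sum.inr i ∧ y = Sum.inr j ∧ (i : ℕ) + 1 = (j : ℕ)) ∨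
    (x = Sum.inl u ∧ ∃ i : Fin a, y = Sum.inr i ∧ (i : ℕ) = 0))

/-!
Write `χ` with the vertex degrees replaced by an arbitrary weight `δ`. Attaching a path at `u`
leaves the edges of `Q` in place but raises the degree of `u` by one, adds the edge from `u` to
the path, and adds the path edges, whose contribution `P(n) = (n - 2)/2 + 1/√3` (for `n ≥ 2`)
depends only on the length. Unfolding both graphs this way, the `Q`-part of `χ(G₁)` is computed
with `d(u)` raised by two instead of by one, which can only decrease it, and what remains is an
inequality between a few inverse square roots, settled according to whether `a` and `b` are `1`.
-/

open Finset SimpleGraph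

section
open scoped Classical

variable {V : Type*}

noncomputable def sumConnWith [Fintype V] (G : SimpleGraph V) (δ : V → ℝ) : ℝ :=
  (1 / 2) * ∑ v, ∑ w, if G.Adj v w then (√(δ v + δ w))⁻¹ else 0

lemma sumConn_eq_sumConnWith [Fintype V] (G : SimpleGraph V) :
    sumConn G = sumConnWith G fun v => G.degree v := rfl

lemma sumConnWith_anti [Fintype V] (G : SimpleGraph V) {δ δ' : V → ℝ} (h : δ ≤ δ')
    (hpos : ∀ v w, G.Adj v w → 0 < δ v + δ w) : sumConnWith G δ' ≤ sumConnWith G δ := by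
  unfold sumConnWith
  gcongr with v _ w _
  split_ifs with hvw
  · have := hpos v w hvw
    gcongr
    exacts [h v, h w]
  · rfl

lemma degree_eq_sum_ite [Fintype V] (G : SimpleGraph V) (v : V) :
    G.degree v = ∑ w, if G.Adj v w then 1 else 0 := by
  rw [← card_neighborFinset_eq_degree, neighborFinset_eq_filter, card_filter]

variable {M : Type*} [AddCommMonoid M]

lemma Fin.sum_ite_val_eq (n m : ℕ) (h : ℕ → M) :
    ∑ j : Fin n, (if (j : ℕ) = m then h j else 0) = if m < n then h m else 0 := by
  rw [Fin.sum_univ_eq_sum_range (fun k => if k = m then h k else 0), sum_ite_eq']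
  simp only [mem_range]

lemma Fin.sum_ite_val_eq_zero {n : ℕ} (hn : 0 < n) (f : Fin n → M) :
    ∑ i : Fin n, (if (i : ℕ) = 0 then f i else 0) = f ⟨0, hn⟩ :=
  (Fintype.sum_eq_single ⟨0, hn⟩ fun _ hi => if_neg fun h => hi (Fin.ext h)).trans (if_pos rfl)

lemma sum_pathGraph_adj {n : ℕ} (i : Fin n) (h : ℕ → M) :
    ∑ j : Fin n, (if (pathGraph n).Adj i j then h j else 0)
      = (if (i : ℕ) + 1 < n then h (i + 1) else 0) + if (i : ℕ) = 0 then 0 else h (i - 1) := by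
  have hsplit : ∀ j : Fin n, (if (pathGraph n).Adj i j then h j else 0)
      = (if (j : ℕ) = i + 1 then h j else 0)
        + if (i : ℕ) = 0 then 0 else if (j : ℕ) = i - 1 then h j else 0 := by
    intro j
    rw [pathGraph_adj]
    split_ifs <;> first | omega | simp_all
  simp only [hsplit, sum_add_distrib, Fin.sum_ite_val_eq]
  congr 1
  split_ifs with hi
  · simp
  · rw [Fin.sum_ite_val_eq, if_pos (by omega)]

lemma sumConnWith_pathGraph {n : ℕ} (h : ℕ → ℝ) :
    sumConnWith (pathGraph n) (fun i => h i) = ∑ k ∈ range (n - 1), (√(h k + h (k + 1)))⁻¹ := by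
  unfold sumConnWith
  simp only [fun i : Fin n => sum_pathGraph_adj i (fun j => (√(h i + h j))⁻¹)]
  rw [Fin.sum_univ_eq_sum_range (fun i => (if i + 1 < n then (√(h i + h (i + 1)))⁻¹ else 0)
    + if i = 0 then 0 else (√(h i + h (i - 1)))⁻¹)]
  obtain _ | m := n
  · simp
  rw [sum_add_distrib, sum_range_succ, sum_range_succ']
  simp only [Order.lt_add_one_iff, Order.add_one_le_iff, lt_self_iff_false, ↓reduceIte, add_zero,
    Nat.add_eq_zero_iff, one_ne_zero, and_false, add_tsub_cancel_right]
  rw [sum_congr rfl fun k hk => if_pos (mem_range.1 hk)]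
  simp only [add_comm (h (_ + 1))]
  ring

section attachPath
variable (Q : SimpleGraph V) (u : V) {n : ℕ}

@[simp] lemma attachPath_adj_inl_inl (v w : V) :
    (attachPath Q u n).Adj (.inl v) (.inl w) ↔ Q.Adj v w := by
  simp only [attachPath, fromRel_adj]
  aesop (add norm SimpleGraph.adj_comm)

@[simp] lemma attachPath_adj_inl_inr (v : V) (j : Fin n) :
    (attachPath Q u n).Adj (.inl v) (.inr j) ↔ v = u ∧ (j : ℕ) = 0 := by
  simp only [attachPath, fromRel_adj]
  aesop

@[simp] lemma attachPath_adj_inr_inl (i : Fin n) (v : V) :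
    (attachPath Q u n).Adj (.inr i) (.inl v) ↔ v = u ∧ (i : ℕ) = 0 := by
  rw [adj_comm, attachPath_adj_inl_inr]

@[simp] lemma attachPath_adj_inr_inr (i j : Fin n) :
    (attachPath Q u n).Adj (.inr i) (.inr j) ↔ (pathGraph n).Adj i j := by
  simp only [attachPath, fromRel_adj, pathGraph_adj]
  aesop (add norm Fin.ext_iff)

variable [Fintype V]

lemma sum_attachPath_adj_inl (hn : 0 < n) (v : V) (g : V ⊕ Fin n → M) :
    ∑ y, (if (attachPath Q u n).Adj (.inl v) y then g y else 0)
      = ∑ w, (if Q.Adj v w then g (.inl w) else 0) + if v = u then g (.inr ⟨0, hn⟩) else 0 := by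
  rw [Fintype.sum_sum_type]
  simp only [attachPath_adj_inl_inl, attachPath_adj_inl_inr, ite_and]
  congr 1
  split_ifs
  · exact Fin.sum_ite_val_eq_zero hn _
  · simp

lemma sum_attachPath_adj_inr (i : Fin n) (g : V ⊕ Fin n → M) :
    ∑ y, (if (attachPath Q u n).Adj (.inr i) y then g y else 0)
      = (if (i : ℕ) = 0 then g (.inl u) else 0)
        + ∑ j, if (pathGraph n).Adj i j then g (.inr j) else 0 := by
  rw [Fintype.sum_sum_type]
  simp [ite_and]

lemma sumConnWith_attachPath (hn : 0 < n) (δ : V ⊕ Fin n → ℝ) :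
    sumConnWith (attachPath Q u n) δ
      = sumConnWith Q (δ ∘ .inl) + sumConnWith (pathGraph n) (δ ∘ .inr)
        + (√(δ (.inl u) + δ (.inr ⟨0, hn⟩)))⁻¹ := by
  unfold sumConnWith
  rw [Fintype.sum_sum_type]
  simp only [sum_attachPath_adj_inl Q u hn, sum_attachPath_adj_inr Q u, sum_add_distrib,
    sum_ite_eq', mem_univ, if_true, Fin.sum_ite_val_eq_zero hn, Function.comp_apply]
  rw [add_comm (δ (.inr _))]
  ring

lemma degree_attachPath_inl (hn : 0 < n) (v : V) :
    (attachPath Q u n).degree (.inl v) = Q.degree v + if v = u then 1 else 0 := by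
  simp only [degree_eq_sum_ite, sum_attachPath_adj_inl Q u hn]

/-- The degree of vertex `k` of a path on `n` vertices attached to a graph at its vertex `0`. -/
def pendantPathDegree (n k : ℕ) : ℕ := if k + 1 < n then 2 else 1

lemma degree_attachPath_inr (i : Fin n) :
    (attachPath Q u n).degree (.inr i) = pendantPathDegree n i := by
  rw [degree_eq_sum_ite, sum_attachPath_adj_inr, sum_pathGraph_adj i (fun _ => 1),
    pendantPathDegree]
  split_ifs <;> omega

end attachPath

noncomputable def pendantPathSumConn (n : ℕ) : ℝ :=
  sumConnWith (pathGraph n) fun i => (pendantPathDegree n i : ℝ)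

lemma pendantPathSumConn_one : pendantPathSumConn 1 = 0 := by
  rw [pendantPathSumConn, sumConnWith_pathGraph (fun k => (pendantPathDegree 1 k : ℝ))]
  simp

lemma pendantPathSumConn_of_two_le {n : ℕ} (hn : 2 ≤ n) :
    pendantPathSumConn n = ((n : ℝ) - 2) / 2 + (√3)⁻¹ := by
  obtain ⟨m, rfl⟩ := Nat.exists_eq_add_of_le' hn
  have hinner : ∀ k ∈ range m,
      (√(pendantPathDegree (m + 2) k + pendantPathDegree (m + 2) (k + 1) : ℝ))⁻¹ = 1 / 2 := by
    intro k hk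
    rw [mem_range] at hk
    rw [pendantPathDegree, pendantPathDegree, if_pos (by omega), if_pos (by omega),
      show ((2 : ℕ) + (2 : ℕ) : ℝ) = 2 ^ 2 by norm_num, Real.sqrt_sq zero_le_two, one_div]
  have hlast : pendantPathDegree (m + 2) m + pendantPathDegree (m + 2) (m + 1) = 3 := by
    simp [pendantPathDegree]
  rw [pendantPathSumConn, sumConnWith_pathGraph (fun k => (pendantPathDegree (m + 2) k : ℝ)),
    show m + 2 - 1 = m + 1 from rfl, sum_range_succ, sum_congr rfl hinner, ← Nat.cast_add, hlast]
  simp only [sum_const, card_range, nsmul_eq_mul, Nat.cast_ofNat, Nat.cast_add]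
  ring

/-- The degrees of the vertices of `G` in a graph obtained by attaching `c` paths at `w`. -/
noncomputable def shiftedDegree [Fintype V] (G : SimpleGraph V) (w : V) (c : ℝ) (v : V) : ℝ :=
  G.degree v + if v = w then c else 0

variable [Fintype V]

lemma sumConn_eq_sumConnWith_shiftedDegree (G : SimpleGraph V) (w : V) :
    sumConn G = sumConnWith G (shiftedDegree G w 0) := by
  have : shiftedDegree G w 0 = fun v => (G.degree v : ℝ) := by ext v; simp [shiftedDegree]
  rw [this, sumConn_eq_sumConnWith]

lemma sumConnWith_shiftedDegree_anti (G : SimpleGraph V) (w : V) {c c' : ℝ} (hc : 0 ≤ c)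
    (hcc' : c ≤ c') :
    sumConnWith G (shiftedDegree G w c') ≤ sumConnWith G (shiftedDegree G w c) := by
  refine sumConnWith_anti G (fun v => ?_) fun v x hvx => ?_
  · unfold shiftedDegree
    split_ifs <;> linarith
  · have hv : (1 : ℝ) ≤ G.degree v := by exact_mod_cast (G.degree_pos_iff_exists_adj v).2 ⟨x, hvx⟩
    have hx : (0 : ℝ) ≤ G.degree x := Nat.cast_nonneg _
    unfold shiftedDegree
    split_ifs <;> linarith

lemma sumConnWith_attachPath_shiftedDegree (Q : SimpleGraph V) (u : V) {n : ℕ} (hn : 0 < n)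
    (c : ℝ) :
    sumConnWith (attachPath Q u n) (shiftedDegree (attachPath Q u n) (.inl u) c)
      = sumConnWith Q (shiftedDegree Q u (c + 1)) + pendantPathSumConn n
        + (√(Q.degree u + (c + 1) + pendantPathDegree n 0))⁻¹ := by
  have hinl : shiftedDegree (attachPath Q u n) (.inl u) c ∘ .inl = shiftedDegree Q u (c + 1) := by
    ext v
    simp only [Function.comp_apply, shiftedDegree, degree_attachPath_inl Q u hn, Sum.inl.injEq]
    split_ifs <;> push_cast <;> ring
  have hinr : shiftedDegree (attachPath Q u n) (.inl u) c ∘ .inr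
      = fun i : Fin n => (pendantPathDegree n i : ℝ) := by
    ext i
    simp [shiftedDegree, degree_attachPath_inr]
  have hu : shiftedDegree (attachPath Q u n) (.inl u) c (.inl u) = Q.degree u + (c + 1) := by
    simpa [shiftedDegree] using congrFun hinl u
  have h0 : shiftedDegree (attachPath Q u n) (.inl u) c (.inr ⟨0, hn⟩) = pendantPathDegree n 0 :=
    congrFun hinr ⟨0, hn⟩
  rw [sumConnWith_attachPath Q u hn, hinl, hinr, hu, h0]
  rfl

end

lemma two_mul_inv_sqrt_add_four_lt {d : ℝ} (hd : 1 ≤ d) :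
    2 * (√(d + 4))⁻¹ < (√(d + 3))⁻¹ + 1 - (√3)⁻¹ := by
  set x := √(d + 3)
  set y := √(d + 4)
  have hx : 2 ≤ x := (Real.le_sqrt zero_le_two (by linarith)).2 (by linarith)
  have hy : y ^ 2 = x ^ 2 + 1 := by
    rw [Real.sq_sqrt (by linarith), Real.sq_sqrt (by linarith)]; ring
  have hy0 : 0 < y := Real.sqrt_pos.2 (by linarith)
  -- `1 - 1/√3 > 0.42`, while `2/√(d+4) - 1/√(d+3)` is at most `2/√5 - 1/2 ≈ 0.394`.
  have h3 : (√3)⁻¹ < 0.58 := by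
    rw [inv_lt_comm₀ (by positivity) (by norm_num), Real.lt_sqrt (by norm_num)]; norm_num
  have hkey : 2 * x < y * (1 + 0.42 * x) := by
    apply lt_of_pow_lt_pow_left₀ 2 (by positivity)
    rw [mul_pow y, hy]
    nlinarith [sq_nonneg (x - 2), mul_nonneg (sub_nonneg.2 hx) (sq_nonneg x)]
  have hsub : 2 * y⁻¹ - x⁻¹ - 0.42 = (2 * x - y * (1 + 0.42 * x)) / (x * y) := by
    field_simp
    ring
  have hneg : (2 * x - y * (1 + 0.42 * x)) / (x * y) < 0 :=
    div_neg_of_neg_of_pos (by linarith) (by positivity)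
  linarith

lemma pendantPathSumConn_add_lt {a b : ℕ} (hb : 1 ≤ b) (hab : b ≤ a) {d : ℝ} (hd : 1 ≤ d) :
    pendantPathSumConn a + (√(d + 2 + pendantPathDegree a 0))⁻¹
        + pendantPathSumConn b + (√(d + 2 + pendantPathDegree b 0))⁻¹
      < pendantPathSumConn (a + b) + (√(d + 1 + pendantPathDegree (a + b) 0))⁻¹ := by
  have hdeg : ∀ {n : ℕ}, 2 ≤ n → pendantPathDegree n 0 = 2 := fun hn => if_pos hn
  have hdeg1 : pendantPathDegree 1 0 = 1 := rfl
  rw [pendantPathSumConn_of_two_le (n := a + b) (by omega), hdeg (n := a + b) (by omega)]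
  obtain rfl | hb := hb.eq_or_lt
  · obtain rfl | ha := hab.eq_or_lt
    · have : (√(d + 3))⁻¹ < (√3)⁻¹ :=
        inv_strictAnti₀ (by positivity) (Real.sqrt_lt_sqrt (by norm_num) (by linarith))
      rw [pendantPathSumConn_one, hdeg1]
      norm_num [add_assoc]
      linarith
    · have : (√(d + 4))⁻¹ < 2⁻¹ :=
        inv_strictAnti₀ two_pos ((Real.lt_sqrt zero_le_two).2 (by linarith))
      rw [pendantPathSumConn_of_two_le ha, pendantPathSumConn_one, hdeg ha, hdeg1]
      norm_num [add_assoc]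
      linarith
  · have := two_mul_inv_sqrt_add_four_lt hd
    rw [pendantPathSumConn_of_two_le (by omega), pendantPathSumConn_of_two_le hb, hdeg (by omega),
      hdeg hb]
    norm_num [add_assoc]
    linarith

theorem stmt_18 {V : Type*} [Fintype V] (Q : SimpleGraph V) (hQ : Q.Connected)
    (hV : 2 ≤ Fintype.card V) (u : V) (a b : ℕ) (hb : 1 ≤ b) (hab : b ≤ a) :
    sumConn (attachPath (attachPath Q u a) (Sum.inl u) b) < sumConn (attachPath Q u (a + b)) := by
  classical
  have : Nontrivial V := Fintype.one_lt_card_iff_nontrivial.1 hV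
  have hdu : (1 : ℝ) ≤ Q.degree u := by exact_mod_cast hQ.preconnected.degree_pos_of_nontrivial u
  have hA : ((attachPath Q u a).degree (.inl u) : ℝ) + (0 + 1) = Q.degree u + 2 := by
    rw [degree_attachPath_inl Q u (by omega), if_pos rfl]
    push_cast
    ring
  rw [sumConn_eq_sumConnWith_shiftedDegree _ (.inl (.inl u)),
    sumConn_eq_sumConnWith_shiftedDegree _ (.inl u),
    sumConnWith_attachPath_shiftedDegree _ _ (by omega),
    sumConnWith_attachPath_shiftedDegree _ _ (by omega),
    sumConnWith_attachPath_shiftedDegree _ _ (by omega), hA, zero_add, one_add_one_eq_two]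
  linarith [sumConnWith_shiftedDegree_anti Q u zero_le_one one_le_two,
    pendantPathSumConn_add_lt hb hab hdu]
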